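/- arXiv:2003.10064 — 7 statements merged into one kernel-verified Lean document; each statement's English description precedes it below -/
import Mathlib

section
/- There exist a write history, snapshots M1 < M2, and a snapshot-consistent transaction that reads across blocks: its read set splits into a nonempty set of reads performed against snapshot M1 (each returning the latest version of its key at snapshot M1) and a nonempty set of reads performed against snapshot M2 (each returning the latest version of its key at snapshot M2), and the transaction is snapshot consistent with witnessing snapshot M2, the snapshot of its last read. -/
/-- A timestamp is a pair `(m, p)` of naturals, ordered lexicographically. -/
abbrev Timestamp : Type := ℕ ×ₗ ℕ

/-- A transaction: a start timestamp of the form `(m, 0)`, a commit timestamp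
`(M, q)` with `q ≥ 1` and `start ≤ (M, 0)`, a finite read set of key/version
pairs with versions at most the start timestamp, and a finite write set of keys. -/
structure Txn (Key : Type) where
  startTS : Timestamp
  commitTS : Timestamp
  start_snd : (ofLex startTS).2 = 0
  commit_pos : 1 ≤ (ofLex commitTS).2
  start_le : startTS ≤ toLex ((ofLex commitTS).1, 0)
  reads : Finset (Key × Timestamp)
  writes : Finset Key
  reads_snapshot : ∀ kv ∈ reads, kv.2 ≤ startTS

/-- Concurrency of two transactions with respect to a commit-timestamp assignment `C`. -/
def ConcurrentWith {Key : Type} (C : Txn Key → Timestamp) (t1 t2 : Txn Key) : Prop :=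
  (C t1 < C t2 → t2.startTS < C t1) ∧ (C t2 < C t1 → t1.startTS < C t2)

/-- Concurrency with respect to the original commit timestamps. -/
def Concurrent {Key : Type} (t1 t2 : Txn Key) : Prop :=
  ConcurrentWith (fun t => t.commitTS) t1 t2

/-- Write-write dependency `t1 →ww t2` w.r.t. commit assignment `C`. -/
def wwC {Key : Type} (C : Txn Key → Timestamp) (t1 t2 : Txn Key) : Prop :=
  t1 ≠ t2 ∧ (∃ k, k ∈ t1.writes ∧ k ∈ t2.writes) ∧ C t1 < C t2

/-- Write-read dependency `t1 →wr t2` w.r.t. commit assignment `C`. -/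
def wrC {Key : Type} (C : Txn Key → Timestamp) (t1 t2 : Txn Key) : Prop :=
  t1 ≠ t2 ∧ ∃ kv ∈ t2.reads, kv.1 ∈ t1.writes ∧ kv.2 = C t1

/-- Read-write dependency `t1 →rw t2` w.r.t. commit assignment `C`. -/
def rwC {Key : Type} (C : Txn Key → Timestamp) (t1 t2 : Txn Key) : Prop :=
  t1 ≠ t2 ∧ ∃ kv ∈ t1.reads, kv.1 ∈ t2.writes ∧ kv.2 < C t2

/-- The dependency relation: union of ww, wr and rw. -/
def depC {Key : Type} (C : Txn Key → Timestamp) (t1 t2 : Txn Key) : Prop :=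
  wwC C t1 t2 ∨ wrC C t1 t2 ∨ rwC C t1 t2

/-- `t` is committed with respect to the next block number `M`. -/
def Committed {Key : Type} (M : ℕ) (t : Txn Key) : Prop :=
  (ofLex t.commitTS).1 < M

/-- `t` is pending with respect to the next block number `M`:
its commit timestamp is `(M, p)` (with `p ≥ 1` automatic). -/
def Pending {Key : Type} (M : ℕ) (t : Txn Key) : Prop :=
  (ofLex t.commitTS).1 = M

/-- A reordering of the transactions in `T`: it assigns to each pending
transaction a new commit timestamp `(M, p')` with `p' ≥ 1`, injectively on `T`,
leaving committed transactions' commit timestamps (and, implicitly, all start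
timestamps, read sets and write sets) unchanged. -/
structure Reordering {Key : Type} (M : ℕ) (T : Finset (Txn Key)) where
  newCommit : Txn Key → Timestamp
  fix_committed : ∀ t ∈ T, Committed M t → newCommit t = t.commitTS
  pending_block : ∀ t ∈ T, Pending M t → (ofLex (newCommit t)).1 = M
  pending_pos : ∀ t ∈ T, Pending M t → 1 ≤ (ofLex (newCommit t)).2
  inj : ∀ t ∈ T, ∀ u ∈ T, newCommit t = newCommit u → t = u

/-- `v` is the latest version of key `k` at blockchain snapshot `M`
(the snapshot has sequence number `(M+1, 0)`): `v` is a version of `k` in the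
write history `H`, `v < (M+1, 0)`, and it is the greatest such version. -/
def IsLatest (H : ℕ → Set Timestamp) (M : ℕ) (k : ℕ) (v : Timestamp) : Prop :=
  v ∈ H k ∧ v < toLex (M + 1, 0) ∧ ∀ w ∈ H k, w < toLex (M + 1, 0) → w ≤ v

/-- A transaction is snapshot consistent with witnessing snapshot `M` if every
read returns the latest version of its key at snapshot `M`. -/
def SnapshotConsistentWith (H : ℕ → Set Timestamp) (M : ℕ) (t : Txn ℕ) : Prop :=
  ∀ kv ∈ t.reads, IsLatest H M kv.1 kv.2

/-- there exist a write history, snapshots `M1 < M2`, and a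
snapshot-consistent transaction reading across blocks: its read set splits into
a nonempty set of reads against snapshot `M1` (each returning the latest
version at `M1`) and a nonempty set of reads against snapshot `M2` (each
returning the latest version at `M2`), and the transaction is snapshot
consistent with witnessing snapshot `M2`, the snapshot of its last read. -/
theorem readingAcrossBlocks_can_be_snapshotConsistent :
    ∃ (H : ℕ → Set Timestamp) (M1 M2 : ℕ) (t : Txn ℕ)
      (R1 R2 : Finset (ℕ × Timestamp)),
      M1 < M2 ∧
      R1.Nonempty ∧ R2.Nonempty ∧ Disjoint R1 R2 ∧
      (∀ kv, kv ∈ t.reads ↔ kv ∈ R1 ∨ kv ∈ R2) ∧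
      (∀ kv ∈ R1, IsLatest H M1 kv.1 kv.2) ∧
      (∀ kv ∈ R2, IsLatest H M2 kv.1 kv.2) ∧
      SnapshotConsistentWith H M2 t := by
  refine ⟨fun _ => {toLex (0, 0)}, 0, 1, ?t, {(0, toLex (0, 0))}, {(1, toLex (0, 0))},
    ?_, ?_, ?_, ?_, ?_, ?_, ?_, ?_⟩
  case t =>
    exact { startTS := toLex (2, 0), commitTS := toLex (2, 1),
            start_snd := rfl, commit_pos := le_refl 1,
            start_le := le_refl _,
            reads := {(0, toLex (0, 0)), (1, toLex (0, 0))},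
            writes := ∅,
            reads_snapshot := by decide }
  · exact Nat.zero_lt_one
  · exact ⟨_, Finset.mem_singleton_self _⟩
  · exact ⟨_, Finset.mem_singleton_self _⟩
  · decide
  · intro kv; constructor
    · intro h
      rcases Finset.mem_insert.mp h with h | h
      · exact Or.inl (Finset.mem_singleton.mpr h)
      · exact Or.inr h
    · rintro (h | h)
      · exact Finset.mem_insert.mpr (Or.inl (Finset.mem_singleton.mp h))
      · exact Finset.mem_insert.mpr (Or.inr h)
  · intro kv h
    rw [Finset.mem_singleton.mp h]
    refine ⟨rfl, ?_, ?_⟩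
    · exact Prod.Lex.left _ _ Nat.zero_lt_one
    · intro w hw _; rw [Set.mem_singleton_iff.mp hw]
  · intro kv h
    rw [Finset.mem_singleton.mp h]
    refine ⟨rfl, ?_, ?_⟩
    · exact Prod.Lex.left _ _ (by norm_num)
    · intro w hw _; rw [Set.mem_singleton_iff.mp hw]
  · intro kv h
    rcases Finset.mem_insert.mp h with h | h
    all_goals
      first
        | subst h
        | (rw [Finset.mem_singleton] at h; subst h)
      exact ⟨rfl, Prod.Lex.left _ _ (by norm_num), fun w hw _ => le_of_eq (Set.mem_singleton_iff.mp hw)⟩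
end

section
/- Let T be a finite set of transactions with pairwise distinct commit timestamps in which no anti-rw dependency occurs, i.e. every rw dependency t1 →rw t2 between members of T satisfies commit(t1) < commit(t2). Then the dependency relation dep restricted to T is contained in the strict commit order (dep(t1, t2) implies commit(t1) < commit(t2)); consequently dep has no cycle within T, and enumerating the transactions of T in increasing commit-timestamp order is a serialization respecting every dependency, so the schedule achieves Strong Serializability. -/
/-!
Every dependency already points forward in commit order, except possibly an rw one: a ww
dependency does so by definition, and a wr dependency does because the version read is at most
the reader's start timestamp `(M, 0)`, which lies strictly below its commit timestamp `(M, q)`,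
`q ≥ 1`. Excluding anti-rw dependencies thus makes `dep` a subrelation of the strict commit
order, which is acyclic; and since commit timestamps are distinct, sorting by them gives a list
along which every dependency points forward.
-/

namespace Txn

variable {Key : Type}

theorem startTS_lt_commitTS (t : Txn Key) : t.startTS < t.commitTS := by
  refine t.start_le.trans_lt ?_
  rw [← toLex_ofLex t.commitTS, Prod.Lex.toLex_lt_toLex]
  exact Or.inr ⟨rfl, t.commit_pos⟩

theorem version_lt_commitTS (t : Txn Key) {kv : Key × Timestamp} (h : kv ∈ t.reads) :
    kv.2 < t.commitTS :=
  (t.reads_snapshot kv h).trans_lt t.startTS_lt_commitTS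

end Txn

section Dependencies

variable {Key : Type} {t1 t2 : Txn Key}

theorem wrC_commitTS_lt (h : wrC (fun t => t.commitTS) t1 t2) : t1.commitTS < t2.commitTS := by
  obtain ⟨-, kv, hkv, -, hv⟩ := h
  exact hv.symm.trans_lt (t2.version_lt_commitTS hkv)

theorem depC_commitTS_lt
    (hrw : rwC (fun t => t.commitTS) t1 t2 → t1.commitTS < t2.commitTS)
    (h : depC (fun t => t.commitTS) t1 t2) : t1.commitTS < t2.commitTS := by
  rcases h with ⟨-, -, hww⟩ | hwr | hrw'
  exacts [hww, wrC_commitTS_lt hwr, hrw hrw']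

end Dependencies

theorem Relation.not_transGen_self_of_map_lt {α β : Type*} [Preorder β] {r : α → α → Prop}
    (f : α → β) (h : ∀ a b, r a b → f a < f b) (a : α) : ¬ Relation.TransGen r a a := by
  intro hcyc
  have hlt : Relation.TransGen (· < ·) (f a) (f a) := Relation.TransGen.lift f h a a hcyc
  rw [Relation.transGen_eq_self] at hlt
  exact lt_irrefl _ hlt

theorem Finset.exists_list_pairwise_map_lt {α β : Type*} [LinearOrder β] (s : Finset α)
    (f : α → β) (hf : Set.InjOn f s) :
    ∃ l : List α, (∀ a, a ∈ l ↔ a ∈ s) ∧ l.Pairwise (fun a b => f a < f b) := by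
  set l := s.toList.mergeSort (fun a b => decide (f a ≤ f b))
  have hperm : l.Perm s.toList := List.mergeSort_perm _ _
  have hmem : ∀ a, a ∈ l ↔ a ∈ s := fun a => by rw [hperm.mem_iff, Finset.mem_toList]
  have hle : l.Pairwise (fun a b => decide (f a ≤ f b) = true) :=
    List.pairwise_mergeSort (fun a b c hab hbc => by simp_all only [decide_eq_true_eq]; order)
      (fun a b => by simpa using le_total (f a) (f b)) _
  have hne : l.Pairwise (· ≠ ·) := hperm.nodup_iff.mpr s.nodup_toList
  refine ⟨l, hmem, (hle.and hne).imp_of_mem fun ha hb hab => ?_⟩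
  rw [decide_eq_true_eq] at hab
  exact hab.1.lt_of_ne fun hfab => hab.2 (hf ((hmem _).mp ha) ((hmem _).mp hb) hfab)

theorem List.lt_of_rel_get_of_pairwise_map_lt {α β : Type*} [Preorder β] {r : α → α → Prop}
    {f : α → β} {l : List α} (hl : l.Pairwise (fun a b => f a < f b))
    (h : ∀ a ∈ l, ∀ b ∈ l, r a b → f a < f b) {i j : Fin l.length}
    (hij : r (l.get i) (l.get j)) : i < j := by
  have hmono : StrictMono (fun k => f (l.get k)) := List.pairwise_iff_get.mp hl
  exact hmono.lt_iff_lt.mp (h _ (l.get_mem i) _ (l.get_mem j) hij)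

/-- if a finite set `T` of transactions with pairwise distinct
commit timestamps has no anti-rw dependency (every rw dependency between
members of `T` goes from an earlier to a later commit), then every dependency
between members of `T` goes from an earlier to a later commit; consequently the
dependency relation has no cycle within `T`, and enumerating `T` in increasing
commit-timestamp order gives a serialization respecting every dependency,
i.e. the schedule achieves Strong Serializability. -/
theorem noAntiRW_strongSerializability {Key : Type} (T : Finset (Txn Key))
    (hdist : ∀ t1 ∈ T, ∀ t2 ∈ T, t1.commitTS = t2.commitTS → t1 = t2)
    (hnoanti : ∀ t1 ∈ T, ∀ t2 ∈ T,
      rwC (fun t => t.commitTS) t1 t2 → t1.commitTS < t2.commitTS) :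
    (∀ t1 ∈ T, ∀ t2 ∈ T,
      depC (fun t => t.commitTS) t1 t2 → t1.commitTS < t2.commitTS) ∧
    (∀ t ∈ T, ¬ Relation.TransGen
      (fun a b => a ∈ T ∧ b ∈ T ∧ depC (fun t => t.commitTS) a b) t t) ∧
    (∃ l : List (Txn Key),
      l.Nodup ∧ (∀ t, t ∈ l ↔ t ∈ T) ∧
      l.Pairwise (fun a b => a.commitTS < b.commitTS) ∧
      ∀ (i j : ℕ) (hi : i < l.length) (hj : j < l.length),
        depC (fun t => t.commitTS) (l.get ⟨i, hi⟩) (l.get ⟨j, hj⟩) → i < j) := by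
  have hdep : ∀ t1 ∈ T, ∀ t2 ∈ T,
      depC (fun t => t.commitTS) t1 t2 → t1.commitTS < t2.commitTS :=
    fun t1 h1 t2 h2 => depC_commitTS_lt (hnoanti t1 h1 t2 h2)
  have hacyclic : ∀ t ∈ T, ¬ Relation.TransGen
      (fun a b => a ∈ T ∧ b ∈ T ∧ depC (fun t => t.commitTS) a b) t t :=
    fun t _ => Relation.not_transGen_self_of_map_lt (fun t => t.commitTS)
      (fun a b hab => hdep a hab.1 b hab.2.1 hab.2.2) t
  obtain ⟨l, hmem, hsorted⟩ := T.exists_list_pairwise_map_lt (fun t => t.commitTS) hdist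
  refine ⟨hdep, hacyclic, l, ?_, hmem, hsorted, ?_⟩
  · exact hsorted.imp fun hlt heq => hlt.ne (congrArg _ heq)
  · intro i j hi hj hd
    exact List.lt_of_rel_get_of_pairwise_map_lt hsorted
      (fun a ha b hb => hdep a ((hmem a).mp ha) b ((hmem b).mp hb)) hd
end

section
/- Anti-rw is the only dependency relating a later-committed transaction to an earlier-committed one: if dep(t1, t2) holds and commit(t2) < commit(t1), then the dependency is an rw dependency, i.e. there is some (k, v) ∈ reads(t1) with k ∈ writes(t2) and v < commit(t2); it cannot be a ww or wr dependency. -/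
/-
A transaction reads only versions no later than its start, which lies strictly before its own commit
(the commit timestamp has a positive second component). Hence a transaction can never read the version
written by one that commits after it, and ww dependencies point forward in commit order by definition;
only rw is left for a backward dependency.
-/

theorem Txn.startTS_lt_commitTS_s4 {Key : Type} (t : Txn Key) : t.startTS < t.commitTS := by
  refine t.start_le.trans_lt ?_
  conv_rhs => rw [← toLex_ofLex t.commitTS]
  exact Prod.Lex.lt_iff.mpr (Or.inr ⟨rfl, t.commit_pos⟩)

theorem Txn.lt_commitTS_of_mem_reads {Key : Type} (t : Txn Key) {kv : Key × Timestamp}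
    (hkv : kv ∈ t.reads) : kv.2 < t.commitTS :=
  (t.reads_snapshot kv hkv).trans_lt t.startTS_lt_commitTS_s4

theorem not_wwC_of_le {Key : Type} {C : Txn Key → Timestamp} {t1 t2 : Txn Key}
    (h : C t2 ≤ C t1) : ¬ wwC C t1 t2 :=
  fun ⟨_, _, hlt⟩ => h.not_gt hlt

theorem not_wrC_of_commitTS_le {Key : Type} {t1 t2 : Txn Key}
    (h : t2.commitTS ≤ t1.commitTS) : ¬ wrC (fun t => t.commitTS) t1 t2 := by
  rintro ⟨-, kv, hkv, -, hver⟩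
  exact (t2.lt_commitTS_of_mem_reads hkv).not_ge (hver ▸ h)

theorem rwC_of_depC {Key : Type} {C : Txn Key → Timestamp} {t1 t2 : Txn Key}
    (hdep : depC C t1 t2) (hww : ¬ wwC C t1 t2) (hwr : ¬ wrC C t1 t2) : rwC C t1 t2 :=
  (hdep.resolve_left hww).resolve_left hwr

/-- anti-rw is the only dependency relating a later-committed
transaction to an earlier-committed one: if `dep(t1, t2)` and
`commit(t2) < commit(t1)`, then the dependency is an rw dependency — some
`(k, v) ∈ reads(t1)` has `k ∈ writes(t2)` and `v < commit(t2)` — and it is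
neither a ww nor a wr dependency. -/
theorem antiRW_only_backward_dependency {Key : Type} (t1 t2 : Txn Key)
    (hdep : depC (fun t => t.commitTS) t1 t2)
    (hlt : t2.commitTS < t1.commitTS) :
    (∃ kv ∈ t1.reads, kv.1 ∈ t2.writes ∧ kv.2 < t2.commitTS) ∧
    rwC (fun t => t.commitTS) t1 t2 ∧
    ¬ wwC (fun t => t.commitTS) t1 t2 ∧
    ¬ wrC (fun t => t.commitTS) t1 t2 := by
  have hww := not_wwC_of_le (C := fun t => t.commitTS) hlt.le
  have hwr := not_wrC_of_commitTS_le hlt.le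
  have hrw := rwC_of_depC hdep hww hwr
  exact ⟨hrw.2, hrw, hww, hwr⟩
end

section
/- Reordering can only happen between concurrent transactions: let ρ be a reordering of a finite set T of transactions (with pairwise distinct commit timestamps). If t, u ∈ T are such that the relative order of their commit timestamps under ρ differs from their original relative order, then both t and u are pending, and t and u are concurrent (with respect to both the original and the new commit timestamps). -/
/-! A transaction can only move relative to another if both sit in the open block `M`:
committed transactions keep their timestamps and precede all of block `M`, both before and
after reordering. Two pending transactions are automatically concurrent, since every start
timestamp of a pending transaction is at most `(M, 0)`, below every commit timestamp `(M, q)`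
with `q ≥ 1`. -/

def Flipped {α β : Type*} [Preorder β] (C C' : α → β) (t u : α) : Prop :=
  (C t < C u ∧ C' u < C' t) ∨ (C u < C t ∧ C' t < C' u)

namespace Flipped

variable {α β : Type*} [Preorder β] {C C' : α → β} {t u : α}

theorem symm (h : Flipped C C' t u) : Flipped C C' u t :=
  Or.symm h

theorem not_of_lt_of_lt (h : C t < C u) (h' : C' t < C' u) : ¬Flipped C C' t u := by
  rintro (⟨_, h₂⟩ | ⟨h₁, _⟩)
  · exact lt_asymm h' h₂
  · exact lt_asymm h h₁

theorem not_of_eq_of_eq (ht : C' t = C t) (hu : C' u = C u) : ¬Flipped C C' t u := by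
  rintro (⟨h₁, h₂⟩ | ⟨h₁, h₂⟩) <;> rw [ht, hu] at h₂ <;> exact lt_asymm h₁ h₂

end Flipped

namespace Timestamp

theorem lt_of_fst_lt {a b : Timestamp} (h : (ofLex a).1 < (ofLex b).1) : a < b :=
  Prod.Lex.lt_iff.mpr (Or.inl h)

theorem lt_of_fst_eq_of_snd_pos {m : ℕ} {s c : Timestamp} (hs : s ≤ toLex (m, 0))
    (hc : (ofLex c).1 = m) (hc' : 1 ≤ (ofLex c).2) : s < c :=
  hs.trans_lt (Prod.Lex.lt_iff.mpr (Or.inr ⟨hc.symm, hc'⟩))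

end Timestamp

section Block

variable {Key : Type} {M : ℕ}

theorem Pending.startTS_le {t : Txn Key} (h : Pending M t) : t.startTS ≤ toLex (M, 0) :=
  h ▸ t.start_le

theorem Pending.startTS_lt {t : Txn Key} (h : Pending M t) {c : Timestamp}
    (hc : (ofLex c).1 = M) (hc' : 1 ≤ (ofLex c).2) : t.startTS < c :=
  Timestamp.lt_of_fst_eq_of_snd_pos h.startTS_le hc hc'

theorem concurrentWith_of_pending {t u : Txn Key} (C : Txn Key → Timestamp)
    (ht : Pending M t) (hu : Pending M u)
    (hCt : (ofLex (C t)).1 = M) (hCt' : 1 ≤ (ofLex (C t)).2)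
    (hCu : (ofLex (C u)).1 = M) (hCu' : 1 ≤ (ofLex (C u)).2) : ConcurrentWith C t u :=
  ⟨fun _ => hu.startTS_lt hCt hCt', fun _ => ht.startTS_lt hCu hCu'⟩

namespace Reordering

variable {T : Finset (Txn Key)} (ρ : Reordering M T)

theorem lt_of_committed_of_pending {t u : Txn Key} (ht : t ∈ T) (hu : u ∈ T)
    (hct : Committed M t) (hpu : Pending M u) :
    t.commitTS < u.commitTS ∧ ρ.newCommit t < ρ.newCommit u := by
  refine ⟨Timestamp.lt_of_fst_lt (hct.trans_eq hpu.symm), ?_⟩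
  rw [ρ.fix_committed t ht hct]
  exact Timestamp.lt_of_fst_lt (hct.trans_eq (ρ.pending_block u hu hpu).symm)

theorem not_flipped_of_committed_of_pending {t u : Txn Key} (ht : t ∈ T) (hu : u ∈ T)
    (hct : Committed M t) (hpu : Pending M u) :
    ¬Flipped (·.commitTS) ρ.newCommit t u :=
  Flipped.not_of_lt_of_lt (ρ.lt_of_committed_of_pending ht hu hct hpu).1
    (ρ.lt_of_committed_of_pending ht hu hct hpu).2

theorem pending_of_flipped (hcp : ∀ t ∈ T, Committed M t ∨ Pending M t)
    {t u : Txn Key} (ht : t ∈ T) (hu : u ∈ T) (h : Flipped (·.commitTS) ρ.newCommit t u) :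
    Pending M t ∧ Pending M u := by
  rcases hcp t ht with hct | hpt <;> rcases hcp u hu with hcu | hpu
  · exact absurd h (Flipped.not_of_eq_of_eq (ρ.fix_committed t ht hct) (ρ.fix_committed u hu hcu))
  · exact absurd h (ρ.not_flipped_of_committed_of_pending ht hu hct hpu)
  · exact absurd h.symm (ρ.not_flipped_of_committed_of_pending hu ht hcu hpt)
  · exact ⟨hpt, hpu⟩

end Reordering

end Block

theorem reorder_only_concurrent_general {Key : Type} (M : ℕ) (T : Finset (Txn Key))
    (hcp : ∀ t ∈ T, Committed M t ∨ Pending M t)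
    (ρ : Reordering M T) (t u : Txn Key) (ht : t ∈ T) (hu : u ∈ T)
    (hflip : (t.commitTS < u.commitTS ∧ ρ.newCommit u < ρ.newCommit t) ∨
             (u.commitTS < t.commitTS ∧ ρ.newCommit t < ρ.newCommit u)) :
    Pending M t ∧ Pending M u ∧
    ConcurrentWith (fun x => x.commitTS) t u ∧
    ConcurrentWith ρ.newCommit t u := by
  obtain ⟨hpt, hpu⟩ := ρ.pending_of_flipped hcp ht hu hflip
  exact ⟨hpt, hpu,
    concurrentWith_of_pending _ hpt hpu hpt t.commit_pos hpu u.commit_pos,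
    concurrentWith_of_pending _ hpt hpu (ρ.pending_block t ht hpt) (ρ.pending_pos t ht hpt)
      (ρ.pending_block u hu hpu) (ρ.pending_pos u hu hpu)⟩

/-- reordering can only happen between concurrent transactions.
Let `ρ` be a reordering of a finite set `T` of transactions with pairwise
distinct commit timestamps (each committed or pending w.r.t. the next block
`M`). If the relative order of the commit timestamps of `t, u ∈ T` under `ρ`
differs from the original relative order, then both `t` and `u` are pending,
and they are concurrent with respect to both the original and the new commit
timestamps. -/
theorem reorder_only_concurrent {Key : Type} (M : ℕ) (T : Finset (Txn Key))
    (hdist : ∀ t ∈ T, ∀ u ∈ T, t.commitTS = u.commitTS → t = u)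
    (hcp : ∀ t ∈ T, Committed M t ∨ Pending M t)
    (ρ : Reordering M T) (t u : Txn Key) (ht : t ∈ T) (hu : u ∈ T)
    (hflip : (t.commitTS < u.commitTS ∧ ρ.newCommit u < ρ.newCommit t) ∨
             (u.commitTS < t.commitTS ∧ ρ.newCommit t < ρ.newCommit u)) :
    Pending M t ∧ Pending M u ∧
    ConcurrentWith (fun x => x.commitTS) t u ∧
    ConcurrentWith ρ.newCommit t u :=
  reorder_only_concurrent_general M T hcp ρ t u ht hu hflip
end

section
/- A transaction does not change its concurrency relationship with respect to others after reordering: let ρ be a reordering of a finite set T of transactions (with pairwise distinct commit timestamps, each either committed or pending with respect to M). Then for all t, u ∈ T, t and u are concurrent with respect to the original commit timestamps if and only if t and u are concurrent with respect to the new commit timestamps assigned by ρ. -/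
/-!
A reordering only permutes commit timestamps inside block `M`, and every timestamp `(M, p)` with
`p ≥ 1` lies above every start timestamp. So each half of concurrency, "if `t` commits before `u`
then `u` starts before `t` commits", survives on its own: if `t` is committed, its timestamp and
its order relative to `u` are untouched; if `t` is pending, `u` starts before `t` commits under
either assignment.
-/

theorem Txn.startTS_lt_of_fst_le {Key : Type} (t : Txn Key) {c : Timestamp}
    (h₁ : (ofLex t.commitTS).1 ≤ (ofLex c).1) (h₂ : 0 < (ofLex c).2) : t.startTS < c := by
  refine t.start_le.trans_lt (Prod.Lex.lt_iff.mpr ?_)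
  rcases h₁.lt_or_eq with h | h
  · exact Or.inl h
  · exact Or.inr ⟨h, h₂⟩

section Block

variable {Key : Type} {M : ℕ}

theorem fst_commitTS_le_of_committed_or_pending {t : Txn Key}
    (ht : Committed M t ∨ Pending M t) : (ofLex t.commitTS).1 ≤ M :=
  ht.elim le_of_lt le_of_eq

theorem Txn.startTS_lt_commitTS_of_pending {t u : Txn Key} (ht : Pending M t)
    (hu : Committed M u ∨ Pending M u) : u.startTS < t.commitTS :=
  u.startTS_lt_of_fst_le ((fst_commitTS_le_of_committed_or_pending hu).trans_eq ht.symm)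
    t.commit_pos

theorem commitTS_lt_of_committed_of_pending {t u : Txn Key} (ht : Committed M t)
    (hu : Pending M u) : t.commitTS < u.commitTS :=
  Prod.Lex.lt_iff.mpr (Or.inl (ht.trans_eq hu.symm))

namespace Reordering

variable {T : Finset (Txn Key)} (ρ : Reordering M T)

theorem startTS_lt_newCommit_of_pending {t u : Txn Key} (ht : t ∈ T) (hpt : Pending M t)
    (hu : Committed M u ∨ Pending M u) : u.startTS < ρ.newCommit t :=
  u.startTS_lt_of_fst_le
    ((fst_commitTS_le_of_committed_or_pending hu).trans_eq (ρ.pending_block t ht hpt).symm)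
    (ρ.pending_pos t ht hpt)

theorem newCommit_lt_of_committed_of_pending {t u : Txn Key} (ht : t ∈ T) (hu : u ∈ T)
    (hct : Committed M t) (hpu : Pending M u) : ρ.newCommit t < ρ.newCommit u := by
  rw [ρ.fix_committed t ht hct]
  exact Prod.Lex.lt_iff.mpr (Or.inl (hct.trans_eq (ρ.pending_block u hu hpu).symm))

theorem commitTS_lt_iff_newCommit_lt {t u : Txn Key} (ht : t ∈ T) (hu : u ∈ T)
    (hct : Committed M t) (hcpu : Committed M u ∨ Pending M u) :
    t.commitTS < u.commitTS ↔ ρ.newCommit t < ρ.newCommit u := by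
  rcases hcpu with hcu | hpu
  · rw [ρ.fix_committed t ht hct, ρ.fix_committed u hu hcu]
  · exact iff_of_true (commitTS_lt_of_committed_of_pending hct hpu)
      (ρ.newCommit_lt_of_committed_of_pending ht hu hct hpu)

theorem lt_imp_startTS_lt_iff {t u : Txn Key} (ht : t ∈ T) (hu : u ∈ T)
    (hcpt : Committed M t ∨ Pending M t) (hcpu : Committed M u ∨ Pending M u) :
    (t.commitTS < u.commitTS → u.startTS < t.commitTS) ↔
      (ρ.newCommit t < ρ.newCommit u → u.startTS < ρ.newCommit t) := by
  rcases hcpt with hct | hpt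
  · rw [ρ.commitTS_lt_iff_newCommit_lt ht hu hct hcpu, ρ.fix_committed t ht hct]
  · exact iff_of_true (fun _ => Txn.startTS_lt_commitTS_of_pending hpt hcpu)
      (fun _ => ρ.startTS_lt_newCommit_of_pending ht hpt hcpu)

end Reordering

end Block

theorem reorder_preserves_concurrency_general {Key : Type} (M : ℕ) (T : Finset (Txn Key))
    (hcp : ∀ t ∈ T, Committed M t ∨ Pending M t)
    (ρ : Reordering M T) :
    ∀ t ∈ T, ∀ u ∈ T,
      (ConcurrentWith (fun x => x.commitTS) t u ↔ ConcurrentWith ρ.newCommit t u) :=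
  fun t ht u hu =>
    and_congr (ρ.lt_imp_startTS_lt_iff ht hu (hcp t ht) (hcp u hu))
      (ρ.lt_imp_startTS_lt_iff hu ht (hcp u hu) (hcp t ht))

/-- a transaction does not change its concurrency relationship
with respect to others after reordering: for a reordering `ρ` of a finite set
`T` of transactions with pairwise distinct commit timestamps (each committed or
pending w.r.t. `M`), any `t, u ∈ T` are concurrent with respect to the original
commit timestamps iff they are concurrent with respect to the new ones. -/
theorem reorder_preserves_concurrency {Key : Type} (M : ℕ) (T : Finset (Txn Key))
    (hdist : ∀ t ∈ T, ∀ u ∈ T, t.commitTS = u.commitTS → t = u)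
    (hcp : ∀ t ∈ T, Committed M t ∨ Pending M t)
    (ρ : Reordering M T) :
    ∀ t ∈ T, ∀ u ∈ T,
      (ConcurrentWith (fun x => x.commitTS) t u ↔ ConcurrentWith ρ.newCommit t u) :=
  reorder_preserves_concurrency_general M T hcp ρ
end

section
/- A transaction schedule cannot be reordered to be serializable if it contains a dependency cycle with no write-write dependencies between pending transactions: let T be a finite set of transactions with pairwise distinct commit timestamps, each either committed or pending with respect to M, and suppose the dependency relation dep contains a cycle t_0 → t_1 → ... → t_n = t_0 in T such that no edge of the cycle is a ww dependency between two pending transactions. Then for every reordering ρ, every edge of the cycle remains a dependency with respect to the new commit timestamps; in particular the recomputed dependency relation dep' still contains a cycle, so no reordering makes the schedule serializable. -/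
/-! A reordering only moves timestamps strictly above `(M, 0)`, while every committed timestamp
and every snapshot version read lies at or below `(M, 0)`. Hence the writer of a version read is
committed and keeps its timestamp (wr edges survive), and a pending writer stays above every
version (rw edges survive). A ww edge cannot run from a pending to a committed transaction, so
unless both ends are pending it joins a committed one to something at least as late, and
survives as well. The preserved edges close up into a cycle of the new dependency relation. -/

theorem Relation.TransGen.of_forall_succ {α : Type*} {r : α → α → Prop} {c : ℕ → α}
    {n : ℕ} (hn : 1 ≤ n) (hc : ∀ i < n, r (c i) (c (i + 1))) : Relation.TransGen r (c 0) (c n) := by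
  induction n, hn using Nat.le_induction with
  | base => exact .single (hc 0 one_pos)
  | succ m _ ih => exact .tail (ih fun i hi => hc i (by omega)) (hc m (by omega))

namespace Txn

variable {Key : Type} {M : ℕ} {t : Txn Key}

lemma commitTS_fst_le (h : Committed M t ∨ Pending M t) : (ofLex t.commitTS).1 ≤ M :=
  h.elim le_of_lt le_of_eq

lemma commitTS_lt_of_committed (h : Committed M t) : t.commitTS < toLex (M, 0) :=
  Prod.Lex.lt_iff.mpr (Or.inl h)

lemma committed_of_commitTS_le (h : t.commitTS ≤ toLex (M, 0)) : Committed M t := by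
  rcases Prod.Lex.le_iff.mp h with h | ⟨-, h⟩
  · exact h
  · exact absurd t.commit_pos (by simp_all)

lemma committed_of_commitTS_lt {u : Txn Key} (hu : Committed M u)
    (h : t.commitTS < u.commitTS) : Committed M t :=
  (Prod.Lex.monotone_fst _ _ h.le).trans_lt hu

lemma version_le_of_mem_reads (h : Committed M t ∨ Pending M t) {kv : Key × Timestamp}
    (hkv : kv ∈ t.reads) : kv.2 ≤ toLex (M, 0) :=
  (t.reads_snapshot kv hkv).trans <|
    t.start_le.trans (Prod.Lex.toLex_mono ⟨commitTS_fst_le h, le_rfl⟩)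

end Txn

namespace Reordering

variable {Key : Type} {M : ℕ} {T : Finset (Txn Key)} (ρ : Reordering M T) {t1 t2 : Txn Key}

lemma lt_newCommit_of_pending (ht1 : t1 ∈ T) (hp : Pending M t1) :
    toLex (M, 0) < ρ.newCommit t1 :=
  Prod.Lex.lt_iff.mpr (Or.inr ⟨(ρ.pending_block t1 ht1 hp).symm, ρ.pending_pos t1 ht1 hp⟩)

lemma wwC_newCommit (ht1 : t1 ∈ T) (ht2 : t2 ∈ T) (hcp1 : Committed M t1 ∨ Pending M t1)
    (hcp2 : Committed M t2 ∨ Pending M t2) (h : wwC (fun x => x.commitTS) t1 t2)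
    (hpp : ¬ (Pending M t1 ∧ Pending M t2)) :
    wwC ρ.newCommit t1 t2 := by
  obtain ⟨hne, hk, hlt⟩ := h
  refine ⟨hne, hk, ?_⟩
  rcases hcp2 with hc2 | hp2
  · have hc1 := Txn.committed_of_commitTS_lt hc2 hlt
    rwa [ρ.fix_committed t1 ht1 hc1, ρ.fix_committed t2 ht2 hc2]
  · have hc1 : Committed M t1 := hcp1.resolve_right fun hp1 => hpp ⟨hp1, hp2⟩
    rw [ρ.fix_committed t1 ht1 hc1]
    exact (Txn.commitTS_lt_of_committed hc1).trans (ρ.lt_newCommit_of_pending ht2 hp2)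

lemma wrC_newCommit (ht1 : t1 ∈ T) (hcp2 : Committed M t2 ∨ Pending M t2)
    (h : wrC (fun x => x.commitTS) t1 t2) : wrC ρ.newCommit t1 t2 := by
  obtain ⟨hne, kv, hkv, hk, hv⟩ := h
  have hv' : kv.2 = t1.commitTS := hv
  have hc1 : Committed M t1 :=
    Txn.committed_of_commitTS_le (hv' ▸ Txn.version_le_of_mem_reads hcp2 hkv)
  exact ⟨hne, kv, hkv, hk, (ρ.fix_committed t1 ht1 hc1).symm ▸ hv⟩

lemma rwC_newCommit (ht2 : t2 ∈ T) (hcp1 : Committed M t1 ∨ Pending M t1)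
    (hcp2 : Committed M t2 ∨ Pending M t2)
    (h : rwC (fun x => x.commitTS) t1 t2) : rwC ρ.newCommit t1 t2 := by
  obtain ⟨hne, kv, hkv, hk, hv⟩ := h
  refine ⟨hne, kv, hkv, hk, ?_⟩
  rcases hcp2 with hc2 | hp2
  · rwa [ρ.fix_committed t2 ht2 hc2]
  · exact (Txn.version_le_of_mem_reads hcp1 hkv).trans_lt (ρ.lt_newCommit_of_pending ht2 hp2)

lemma depC_newCommit (ht1 : t1 ∈ T) (ht2 : t2 ∈ T) (hcp1 : Committed M t1 ∨ Pending M t1)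
    (hcp2 : Committed M t2 ∨ Pending M t2) (h : depC (fun x => x.commitTS) t1 t2)
    (hnoww : ¬ (Pending M t1 ∧ Pending M t2 ∧ wwC (fun x => x.commitTS) t1 t2)) :
    depC ρ.newCommit t1 t2 := by
  rcases h with hww | hwr | hrw
  · exact .inl <|
      ρ.wwC_newCommit ht1 ht2 hcp1 hcp2 hww fun ⟨hp1, hp2⟩ => hnoww ⟨hp1, hp2, hww⟩
  · exact .inr <| .inl <| ρ.wrC_newCommit ht1 hcp2 hwr
  · exact .inr <| .inr <| ρ.rwC_newCommit ht2 hcp1 hcp2 hrw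

end Reordering

theorem cycle_without_pending_ww_unreorderable_general {Key : Type}
    (M : ℕ) (T : Finset (Txn Key))
    (hcp : ∀ t ∈ T, Committed M t ∨ Pending M t)
    (n : ℕ) (hn : 1 ≤ n) (c : ℕ → Txn Key)
    (hclose : c n = c 0)
    (hmem : ∀ i ≤ n, c i ∈ T)
    (hedge : ∀ i < n, depC (fun x => x.commitTS) (c i) (c (i + 1)))
    (hnoww : ∀ i < n, ¬ (Pending M (c i) ∧ Pending M (c (i + 1)) ∧
      wwC (fun x => x.commitTS) (c i) (c (i + 1))))
    (ρ : Reordering M T) :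
    (∀ i < n, depC ρ.newCommit (c i) (c (i + 1))) ∧
    (∃ t ∈ T, Relation.TransGen
      (fun a b => a ∈ T ∧ b ∈ T ∧ depC ρ.newCommit a b) t t) := by
  have hdep : ∀ i < n, depC ρ.newCommit (c i) (c (i + 1)) := fun i hi =>
    ρ.depC_newCommit (hmem i hi.le) (hmem (i + 1) hi) (hcp _ (hmem i hi.le))
      (hcp _ (hmem (i + 1) hi)) (hedge i hi) (hnoww i hi)
  refine ⟨hdep, c 0, hmem 0 n.zero_le, ?_⟩
  have hcycle := Relation.TransGen.of_forall_succ (c := c)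
    (r := fun a b => a ∈ T ∧ b ∈ T ∧ depC ρ.newCommit a b) hn
    fun i hi => ⟨hmem i hi.le, hmem (i + 1) hi, hdep i hi⟩
  rwa [hclose] at hcycle

/-- a transaction schedule cannot be reordered to be serializable
if it contains a dependency cycle with no ww dependencies between pending
transactions. Let `T` be a finite set of transactions with pairwise distinct
commit timestamps, each committed or pending w.r.t. `M`, and let
`c 0 → c 1 → ... → c n = c 0` (`n ≥ 1`) be a dependency cycle in `T` such that
no edge is a ww dependency between two pending transactions. Then for every
reordering `ρ`, every edge of the cycle remains a dependency w.r.t. the new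
commit timestamps; in particular the recomputed dependency relation still
contains a cycle, so no reordering makes the schedule serializable. -/
theorem cycle_without_pending_ww_unreorderable {Key : Type}
    (M : ℕ) (T : Finset (Txn Key))
    (hdist : ∀ t ∈ T, ∀ u ∈ T, t.commitTS = u.commitTS → t = u)
    (hcp : ∀ t ∈ T, Committed M t ∨ Pending M t)
    (n : ℕ) (hn : 1 ≤ n) (c : ℕ → Txn Key)
    (hclose : c n = c 0)
    (hmem : ∀ i ≤ n, c i ∈ T)
    (hedge : ∀ i < n, depC (fun x => x.commitTS) (c i) (c (i + 1)))
    (hnoww : ∀ i < n, ¬ (Pending M (c i) ∧ Pending M (c (i + 1)) ∧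
      wwC (fun x => x.commitTS) (c i) (c (i + 1))))
    (ρ : Reordering M T) :
    (∀ i < n, depC ρ.newCommit (c i) (c (i + 1))) ∧
    (∃ t ∈ T, Relation.TransGen
      (fun a b => a ∈ T ∧ b ∈ T ∧ depC ρ.newCommit a b) t t) :=
  cycle_without_pending_ww_unreorderable_general M T hcp n hn c hclose hmem hedge hnoww ρ
end

section
/- A cyclic transaction schedule containing a write-write conflict between pending transactions can be reordered to be serializable: there exist a finite set T of transactions with pairwise distinct commit timestamps (each committed or pending with respect to some M) and a reordering ρ such that the dependency relation dep on T contains a cycle, the cycle contains a ww dependency between two pending transactions, and the dependency relation dep' recomputed with the new commit timestamps assigned by ρ is contained in the new strict commit order and hence acyclic. -/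
noncomputable section

open Classical in
/-- Transaction A: commits at (1,1), writes key 0, no reads. -/
def tA : Txn ℕ where
  startTS := toLex (0, 0)
  commitTS := toLex (1, 1)
  start_snd := rfl
  commit_pos := le_refl 1
  start_le := by decide
  reads := ∅
  writes := {0}
  reads_snapshot := by simp

open Classical in
/-- Transaction B: commits at (1,2), writes key 0, reads (0, (0,0)). -/
def tB : Txn ℕ where
  startTS := toLex (0, 0)
  commitTS := toLex (1, 2)
  start_snd := rfl
  commit_pos := by decide
  start_le := by decide
  reads := {(0, toLex (0, 0))}
  writes := {0}
  reads_snapshot := by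
    intro kv hkv
    simp only [Finset.mem_singleton] at hkv
    subst hkv
    exact le_refl _

lemma tA_ne_tB : tA ≠ tB := by
  intro h
  have h2 : tA.commitTS = tB.commitTS := congrArg Txn.commitTS h
  have : (toLex ((1 : ℕ), (1 : ℕ)) : Timestamp) ≠ toLex (1, 2) := by decide
  exact this h2

/-- a cyclic transaction schedule containing a ww conflict
between pending transactions can be reordered to be serializable: there exist a
finite set `T` of transactions with pairwise distinct commit timestamps (each
committed or pending w.r.t. some `M`) and a reordering `ρ` such that the
dependency relation on `T` contains a cycle, the cycle contains a ww dependency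
between two pending transactions, and the dependency relation recomputed with
the new commit timestamps is contained in the new strict commit order — hence
acyclic. -/
theorem cycle_with_pending_ww_reorderable :
    ∃ (M : ℕ) (T : Finset (Txn ℕ)) (ρ : Reordering M T),
      (∀ t ∈ T, ∀ u ∈ T, t.commitTS = u.commitTS → t = u) ∧
      (∀ t ∈ T, Committed M t ∨ Pending M t) ∧
      (∃ (n : ℕ), 1 ≤ n ∧ ∃ c : ℕ → Txn ℕ,
        c n = c 0 ∧ (∀ i ≤ n, c i ∈ T) ∧
        (∀ i < n, depC (fun x => x.commitTS) (c i) (c (i + 1))) ∧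
        (∃ i < n, Pending M (c i) ∧ Pending M (c (i + 1)) ∧
          wwC (fun x => x.commitTS) (c i) (c (i + 1)))) ∧
      (∀ t1 ∈ T, ∀ t2 ∈ T,
        depC ρ.newCommit t1 t2 → ρ.newCommit t1 < ρ.newCommit t2) ∧
      (∀ t ∈ T, ¬ Relation.TransGen
        (fun a b => a ∈ T ∧ b ∈ T ∧ depC ρ.newCommit a b) t t) := by

  classical
  refine ⟨1, {tA, tB}, ?_, ?_, ?_, ?_, ?_, ?_⟩
  -- the reordering: swap commit timestamps of tA and tB
  · refine ⟨fun t => if t = tA then toLex (1, 2) else if t = tB then toLex (1, 1)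
        else t.commitTS, ?_, ?_, ?_, ?_⟩
    · intro t ht hc
      rcases Finset.mem_insert.mp ht with h | h
      · subst h; simp [Committed, tA] at hc
      · rw [Finset.mem_singleton] at h; subst h; simp [Committed, tB] at hc
    · intro t ht _
      rcases Finset.mem_insert.mp ht with h | h
      · subst h; simp
      · rw [Finset.mem_singleton] at h; subst h
        simp [tA_ne_tB.symm]
    · intro t ht _
      rcases Finset.mem_insert.mp ht with h | h
      · subst h; simp
      · rw [Finset.mem_singleton] at h; subst h
        simp [tA_ne_tB.symm]
    · intro t ht u hu h
      rcases Finset.mem_insert.mp ht with h1 | h1 <;>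
        [skip; rw [Finset.mem_singleton] at h1] <;>
      rcases Finset.mem_insert.mp hu with h2 | h2 <;>
        [skip; rw [Finset.mem_singleton] at h2; skip; rw [Finset.mem_singleton] at h2] <;>
      subst h1 <;> subst h2 <;> first
        | rfl
        | (simp [tA_ne_tB, tA_ne_tB.symm] at h)
  -- distinct commit timestamps
  · intro t ht u hu h
    rcases Finset.mem_insert.mp ht with h1 | h1 <;>
      [skip; rw [Finset.mem_singleton] at h1] <;>
    rcases Finset.mem_insert.mp hu with h2 | h2 <;>
      [skip; rw [Finset.mem_singleton] at h2; skip; rw [Finset.mem_singleton] at h2] <;>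
    subst h1 <;> subst h2 <;> first
      | rfl
      | exact absurd h (by decide)
  -- committed or pending
  · intro t ht
    rcases Finset.mem_insert.mp ht with h | h
    · subst h; right; rfl
    · rw [Finset.mem_singleton] at h; subst h; right; rfl
  -- the cycle
  · refine ⟨2, by norm_num, fun i => if i % 2 = 0 then tA else tB, by norm_num, ?_, ?_, ?_⟩
    · intro i _
      by_cases h : i % 2 = 0 <;> simp [h, Finset.mem_insert]
    · intro i hi
      interval_cases i
      · simp only [Nat.zero_mod, if_pos rfl]
        norm_num
        left
        exact ⟨tA_ne_tB, ⟨0, by simp [tA, tB]⟩, by decide⟩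
      · norm_num
        right; right
        refine ⟨tA_ne_tB.symm, (0, toLex (0, 0)), ?_, ?_, by decide⟩
        · simp [tB]
        · simp [tA]
    · refine ⟨0, by norm_num, rfl, rfl, ?_⟩
      norm_num
      exact ⟨tA_ne_tB, ⟨0, by simp [tA, tB]⟩, by decide⟩
  -- dep' is contained in the new order
  · intro t1 ht1 t2 ht2 hdep
    rcases Finset.mem_insert.mp ht1 with h1 | h1 <;>
      [skip; rw [Finset.mem_singleton] at h1] <;>
    rcases Finset.mem_insert.mp ht2 with h2 | h2 <;>
      [skip; rw [Finset.mem_singleton] at h2; skip; rw [Finset.mem_singleton] at h2] <;>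
    subst h1 <;> subst h2
    · rcases hdep with h | h | h <;> exact absurd rfl h.1
    · exfalso
      rcases hdep with h | h | h
      · have := h.2.2
        simp only [if_pos rfl, if_neg tA_ne_tB.symm, if_pos rfl] at this
        exact absurd this (by decide)
      · obtain ⟨_, kv, hkv, _, heq⟩ := h
        simp only [if_pos rfl] at heq
        simp only [tB, Finset.mem_singleton] at hkv
        subst hkv
        exact absurd heq (by decide)
      · obtain ⟨_, kv, hkv, _, _⟩ := h
        simp [tA] at hkv
    · simp only [if_neg tA_ne_tB.symm, if_pos rfl]
      decide
    · rcases hdep with h | h | h <;> exact absurd rfl h.1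
  -- acyclicity
  · intro t ht htg
    set C : Txn ℕ → Timestamp := fun t => if t = tA then toLex (1, 2)
      else if t = tB then toLex (1, 1) else t.commitTS with hC
    have key : ∀ a b, Relation.TransGen
        (fun a b => a ∈ ({tA, tB} : Finset (Txn ℕ)) ∧
          b ∈ ({tA, tB} : Finset (Txn ℕ)) ∧ depC C a b) a b → C a < C b := by
      intro a b h
      induction h with
      | single h =>
        obtain ⟨ha, hb, hd⟩ := h
        rcases Finset.mem_insert.mp ha with h1 | h1 <;>
          [skip; rw [Finset.mem_singleton] at h1] <;>
        rcases Finset.mem_insert.mp hb with h2 | h2 <;>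
          [skip; rw [Finset.mem_singleton] at h2; skip; rw [Finset.mem_singleton] at h2] <;>
        subst h1 <;> subst h2
        · rcases hd with h | h | h <;> exact absurd rfl h.1
        · exfalso
          rcases hd with h | h | h
          · have := h.2.2
            simp only [hC, if_pos rfl, if_neg tA_ne_tB.symm] at this
            exact absurd this (by decide)
          · obtain ⟨_, kv, hkv, _, heq⟩ := h
            simp only [hC, if_pos rfl] at heq
            simp only [tB, Finset.mem_singleton] at hkv
            subst hkv
            exact absurd heq (by decide)
          · obtain ⟨_, kv, hkv, _, _⟩ := h
            simp [tA] at hkv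
        · simp only [hC, if_neg tA_ne_tB.symm, if_pos rfl]
          decide
        · rcases hd with h | h | h <;> exact absurd rfl h.1
      | tail _ h ih =>
        obtain ⟨ha, hb, hd⟩ := h
        refine lt_trans ih ?_
        rcases Finset.mem_insert.mp ha with h1 | h1 <;>
          [skip; rw [Finset.mem_singleton] at h1] <;>
        rcases Finset.mem_insert.mp hb with h2 | h2 <;>
          [skip; rw [Finset.mem_singleton] at h2; skip; rw [Finset.mem_singleton] at h2] <;>
        subst h1 <;> subst h2
        · rcases hd with h | h | h <;> exact absurd rfl h.1
        · exfalso
          rcases hd with h | h | h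
          · have := h.2.2
            simp only [hC, if_pos rfl, if_neg tA_ne_tB.symm] at this
            exact absurd this (by decide)
          · obtain ⟨_, kv, hkv, _, heq⟩ := h
            simp only [hC, if_pos rfl] at heq
            simp only [tB, Finset.mem_singleton] at hkv
            subst hkv
            exact absurd heq (by decide)
          · obtain ⟨_, kv, hkv, _, _⟩ := h
            simp [tA] at hkv
        · simp only [hC, if_neg tA_ne_tB.symm, if_pos rfl]
          decide
        · rcases hd with h | h | h <;> exact absurd rfl h.1
    exact lt_irrefl _ (key t t htg)


end
end
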